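/- For prime d, if a complete set of d²+1 mutually unbiased bases of ℂ^d ⊗ ℂ^d contains d+1 bases consisting entirely of product states, then it contains at least d(d−1) = (d²+1) − (d+1) bases that do not consist of product states. -/

import Mathlib

/-!
For a unit vector `v` of `ℂ^d ⊗ ℂ^d` with reduced density matrix `ρ_v = Tr₂ |v⟩⟨v|`, the purity
`tr ρ_v²` equals `1` when `v` is a product vector and is at least `1/d` in general. In the
Hilbert–Schmidt space the projectors `|v⟩⟨v|` of a complete set of `d² + 1` MUBs split into blocks
summing to the identity `1`, with inner products `δ` inside a block and `1/d²` across blocks; this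
gives the Bessel-type inequality `∑ |⟪|v⟩⟨v|, X⟫|² ≤ ‖X‖² + |⟪1, X⟫|²`. Taking `X = E_yx ⊗ 1` and
summing over `x, y` bounds the total purity of all `d²(d² + 1)` vectors by `2d³`. A basis of product
vectors contributes `d²` to it and any other basis at least `d`, so at most `d + 1` of the bases
consist of product vectors.
-/

open Matrix Complex

/-- A vector of `ℂ^d ⊗ ℂ^d` (realized as `Fin d × Fin d → ℂ`) is a product state. -/
def IsProductState (d : ℕ) (v : Fin d × Fin d → ℂ) : Prop :=
  ∃ a b : Fin d → ℂ, ∀ p : Fin d × Fin d, v p = a p.1 * b p.2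

open Finset
open scoped InnerProductSpace ComplexConjugate Kronecker

section Bessel

variable {E : Type*} [NormedAddCommGroup E] [InnerProductSpace ℂ E]

theorem norm_le_of_inner_sub_eq_zero {A Y : E} (h : ⟪A, Y - A⟫_ℂ = 0) : ‖A‖ ≤ ‖Y‖ := by
  have := norm_add_sq_eq_norm_sq_add_norm_sq_of_inner_eq_zero A (Y - A) h
  rw [add_sub_cancel] at this
  nlinarith [norm_nonneg A, norm_nonneg Y, mul_self_nonneg ‖Y - A‖]

theorem norm_add_inner_smul_sq (u X : E) :
    ‖X + ⟪u, X⟫_ℂ • u‖ ^ 2 = ‖X‖ ^ 2 + (2 + ‖u‖ ^ 2) * ‖⟪u, X⟫_ℂ‖ ^ 2 := by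
  rw [@norm_add_sq ℂ, inner_smul_right, ← inner_conj_symm (𝕜 := ℂ) X u, Complex.mul_conj',
    norm_smul, mul_pow, ← Complex.ofReal_pow]
  simp only [RCLike.re_to_complex, Complex.ofReal_re]
  ring

variable {κ ι : Type*} [Fintype κ] [Fintype ι] [DecidableEq κ] [DecidableEq ι]

theorem inner_sum_sum_inner_smul (P : κ → ι → E) (u : E) (hres : ∀ k, ∑ i, P k i = u)
    (hgram : ∀ k k' i j, ⟪P k i, P k' j⟫_ℂ =
      if k = k' then (if i = j then 1 else 0) else ((Fintype.card ι : ℂ))⁻¹)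
    (hκ : Fintype.card κ = Fintype.card ι + 1) (X : E) (k : κ) (i : ι) :
    ⟪P k i, ∑ k', ∑ j, ⟪P k' j, X⟫_ℂ • P k' j⟫_ℂ = ⟪P k i, X⟫_ℂ + ⟪u, X⟫_ℂ := by
  have hD : (Fintype.card ι : ℂ) ≠ 0 := Nat.cast_ne_zero.mpr (Fintype.card_pos_iff.mpr ⟨i⟩).ne'
  have hcol (k') : ∑ j, ⟪P k' j, X⟫_ℂ * ⟪P k i, P k' j⟫_ℂ = (Fintype.card ι : ℂ)⁻¹ * ⟪u, X⟫_ℂ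
      + if k = k' then ⟪P k i, X⟫_ℂ - (Fintype.card ι : ℂ)⁻¹ * ⟪u, X⟫_ℂ else 0 := by
    by_cases h : k = k'
    · subst h; simp [hgram]
    · rw [← hres k', sum_inner, mul_sum]
      simp [hgram, h, mul_comm]
  simp only [inner_sum, inner_smul_right, hcol, sum_add_distrib, sum_const, card_univ,
    sum_ite_eq, mem_univ, if_true, hκ]
  linear_combination ⟪u, X⟫_ℂ * inv_mul_cancel₀ hD

theorem sum_sum_norm_inner_sq_le (P : κ → ι → E) (u : E) (hres : ∀ k, ∑ i, P k i = u)
    (hgram : ∀ k k' i j, ⟪P k i, P k' j⟫_ℂ =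
      if k = k' then (if i = j then 1 else 0) else ((Fintype.card ι : ℂ))⁻¹)
    (hκ : Fintype.card κ = Fintype.card ι + 1) (X : E) :
    ∑ k, ∑ i, ‖⟪P k i, X⟫_ℂ‖ ^ 2 ≤ ‖X‖ ^ 2 + ‖⟪u, X⟫_ℂ‖ ^ 2 := by
  set t : κ → ι → ℂ := fun k i => ⟪P k i, X⟫_ℂ
  set τ := ⟪u, X⟫_ℂ
  have hPu (k i) : ⟪P k i, u⟫_ℂ = 1 := by simp [← hres k, hgram]
  have hrow (k) : ∑ i, t k i = τ := by simp only [t, τ, ← sum_inner, hres]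
  -- `A` and `Y` have the same inner product with every `P k i`, so `A` is the orthogonal
  -- projection of `Y` onto their span.
  set A := ∑ k, ∑ i, t k i • P k i
  set Y := X + τ • u
  have hPA (k i) : ⟪P k i, A⟫_ℂ = t k i + τ := inner_sum_sum_inner_smul P u hres hgram hκ X k i
  have hPY (k i) : ⟪P k i, Y⟫_ℂ = t k i + τ := by
    rw [inner_add_right, inner_smul_right, hPu, mul_one]
  have hinnerA (Z : E) : ⟪A, Z⟫_ℂ = ∑ k, ∑ i, conj (t k i) * ⟪P k i, Z⟫_ℂ := by
    simp only [A, sum_inner, inner_smul_left]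
  have hA : ‖A‖ ^ 2 = ∑ k, ∑ i, ‖t k i‖ ^ 2 + (Fintype.card ι + 1) * ‖τ‖ ^ 2 := by
    have hsum : ∑ k, ∑ i, t k i = (Fintype.card κ : ℂ) * τ := by simp [hrow]
    have hAA : ⟪A, A⟫_ℂ = ∑ k, ∑ i, conj (t k i) * t k i + conj (∑ k, ∑ i, t k i) * τ := by
      simp only [hinnerA, hPA, mul_add, sum_add_distrib, map_sum, sum_mul]
    rw [@norm_sq_eq_re_inner ℂ, hAA, hsum, map_mul, Complex.conj_natCast, mul_assoc,
      Complex.conj_mul', hκ]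
    simp_rw [Complex.conj_mul']
    norm_cast
  have hY : ‖Y‖ ^ 2 = ‖X‖ ^ 2 + (2 + Fintype.card ι) * ‖τ‖ ^ 2 := by
    obtain ⟨k⟩ : Nonempty κ := Fintype.card_pos_iff.mp (by omega)
    have hu : ‖u‖ ^ 2 = Fintype.card ι := by
      rw [@norm_sq_eq_re_inner ℂ]
      nth_rewrite 1 [← hres k]
      simp [sum_inner, hPu]
    rw [norm_add_inner_smul_sq, hu]
  have hAY : ‖A‖ ≤ ‖Y‖ := norm_le_of_inner_sub_eq_zero <| by
    simp [hinnerA, hPA, hPY]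
  nlinarith [pow_le_pow_left₀ (norm_nonneg _) hAY 2]

end Bessel

section HilbertSchmidt

variable {n ι : Type*} [Fintype ι]

-- A matrix as a vector of the Hilbert–Schmidt space, where `⟪M, N⟫ = tr (Mᴴ N)`.
noncomputable def hilbertSchmidt (M : Matrix n n ℂ) : EuclideanSpace ℂ (n × n) :=
  WithLp.toLp 2 fun pq => M pq.1 pq.2

theorem sum_hilbertSchmidt (M : ι → Matrix n n ℂ) :
    ∑ i, hilbertSchmidt (M i) = hilbertSchmidt (∑ i, M i) := by
  ext pq
  simp [hilbertSchmidt, WithLp.ofLp_sum, Matrix.sum_apply]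

variable [Fintype n]

theorem inner_hilbertSchmidt (M N : Matrix n n ℂ) :
    ⟪hilbertSchmidt M, hilbertSchmidt N⟫_ℂ = ∑ p, ∑ q, star (M p q) * N p q := by
  simp [hilbertSchmidt, PiLp.inner_apply, Fintype.sum_prod_type, mul_comm]

theorem norm_hilbertSchmidt_sq (M : Matrix n n ℂ) :
    ‖hilbertSchmidt M‖ ^ 2 = ∑ p, ∑ q, ‖M p q‖ ^ 2 := by
  simp [hilbertSchmidt, EuclideanSpace.norm_sq_eq, Fintype.sum_prod_type]

theorem inner_hilbertSchmidt_vecMulVec (v : n → ℂ) (N : Matrix n n ℂ) :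
    ⟪hilbertSchmidt (vecMulVec v (star v)), hilbertSchmidt N⟫_ℂ = star v ⬝ᵥ (N *ᵥ v) := by
  simp only [inner_hilbertSchmidt, vecMulVec_apply, dotProduct, mulVec, mul_sum, star_mul',
    star_star, Pi.star_apply]
  exact sum_congr rfl fun p _ => sum_congr rfl fun q _ => by ring

theorem inner_hilbertSchmidt_vecMulVec_vecMulVec (v w : n → ℂ) :
    ⟪hilbertSchmidt (vecMulVec v (star v)), hilbertSchmidt (vecMulVec w (star w))⟫_ℂ
      = (‖star v ⬝ᵥ w‖ ^ 2 : ℝ) := by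
  rw [inner_hilbertSchmidt_vecMulVec, vecMulVec_mulVec, dotProduct_smul, star_dotProduct w v]
  simp [Complex.mul_conj']

theorem inner_hilbertSchmidt_one [DecidableEq n] (N : Matrix n n ℂ) :
    ⟪hilbertSchmidt (1 : Matrix n n ℂ), hilbertSchmidt N⟫_ℂ = trace N := by
  simp [inner_hilbertSchmidt, one_apply, trace]

theorem sum_vecMulVec_star_eq_one [DecidableEq n] [DecidableEq ι] (b : ι → n → ℂ)
    (hcard : Fintype.card ι = Fintype.card n)
    (horth : ∀ i j, star (b i) ⬝ᵥ b j = if i = j then 1 else 0) :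
    ∑ i, vecMulVec (b i) (star (b i)) = 1 := by
  set N : Matrix ι n ℂ := Matrix.of fun i p => star (b i p)
  have hN : N * Nᴴ = 1 := by
    ext i j
    simpa [N, Matrix.mul_apply, Matrix.one_apply, dotProduct] using horth i j
  have := (mul_eq_one_comm_of_card_eq _ _ _ hcard).mp hN
  ext p q
  simpa [N, Matrix.mul_apply, Matrix.sum_apply, vecMulVec_apply] using congr_fun₂ this p q

end HilbertSchmidt

theorem star_dotProduct_self_eq {n : Type*} [Fintype n] (v : n → ℂ) :
    star v ⬝ᵥ v = ((∑ p, ‖v p‖ ^ 2 : ℝ) : ℂ) := by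
  simp [dotProduct, Complex.conj_mul']

section Purity

variable {α β : Type*} [Fintype β]

noncomputable def reducedDensity (v : α × β → ℂ) : Matrix α α ℂ :=
  Matrix.of fun x y => ∑ z, v (x, z) * star (v (y, z))

theorem reducedDensity_self (v : α × β → ℂ) (x : α) :
    reducedDensity v x x = ((∑ z, ‖v (x, z)‖ ^ 2 : ℝ) : ℂ) := by
  simp [reducedDensity, Complex.mul_conj']

variable [Fintype α]

noncomputable def purity (v : α × β → ℂ) : ℝ :=
  ∑ x, ∑ y, ‖reducedDensity v x y‖ ^ 2

theorem one_le_card_mul_purity {v : α × β → ℂ} (hv : star v ⬝ᵥ v = 1) :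
    1 ≤ Fintype.card α * purity v := by
  set r : α → ℝ := fun x => ∑ z, ‖v (x, z)‖ ^ 2
  have hr : ∑ x, r x = 1 := by
    rw [star_dotProduct_self_eq, Fintype.sum_prod_type] at hv
    exact_mod_cast hv
  have hdiag : ∑ x, r x ^ 2 ≤ purity v := by
    refine sum_le_sum fun x _ => ?_
    have : ‖reducedDensity v x x‖ ^ 2 = r x ^ 2 := by
      rw [reducedDensity_self, Complex.norm_of_nonneg (by positivity)]
    rw [← this]
    exact single_le_sum (f := fun y => ‖reducedDensity v x y‖ ^ 2) (fun _ _ => by positivity)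
      (mem_univ x)
  have hcs := sq_sum_le_card_mul_sum_sq (s := univ) (f := r)
  rw [hr, card_univ] at hcs
  nlinarith [Fintype.card α]

theorem purity_eq_one_of_eq_mul {v : α × β → ℂ} (a : α → ℂ) (b : β → ℂ)
    (hab : ∀ p, v p = a p.1 * b p.2) (hv : star v ⬝ᵥ v = 1) : purity v = 1 := by
  set A := ∑ x, ‖a x‖ ^ 2
  set B := ∑ z, ‖b z‖ ^ 2
  have hAB : A * B = 1 := by
    rw [star_dotProduct_self_eq, Fintype.sum_prod_type] at hv
    simp only [hab, norm_mul, mul_pow, ← mul_sum, ← sum_mul] at hv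
    exact_mod_cast hv
  have hρ (x y) : ‖reducedDensity v x y‖ ^ 2 = ‖a x‖ ^ 2 * ‖a y‖ ^ 2 * B ^ 2 := by
    have : reducedDensity v x y = a x * star (a y) * (B : ℂ) := by
      simp only [reducedDensity, of_apply, hab, star_mul', B]
      push_cast
      rw [mul_sum]
      refine sum_congr rfl fun z _ => ?_
      rw [← Complex.mul_conj', ← Complex.star_def]
      ring
    rw [this]
    simp only [norm_mul, norm_star, Complex.norm_real, Real.norm_eq_abs, mul_pow, sq_abs]
  calc purity v = (A * B) ^ 2 := by simp only [purity, hρ, ← sum_mul, ← mul_sum]; ring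
    _ = 1 := by rw [hAB, one_pow]

end Purity

section PartialTrace

variable {α β : Type*} [Fintype α] [Fintype β] [DecidableEq α] [DecidableEq β]

theorem star_dotProduct_single_kronecker_one_mulVec (v : α × β → ℂ) (x y : α) :
    star v ⬝ᵥ ((single y x (1 : ℂ) ⊗ₖ (1 : Matrix β β ℂ)) *ᵥ v) = reducedDensity v x y := by
  simp [dotProduct, mulVec, Fintype.sum_prod_type, single_apply, one_apply, ite_and,
    reducedDensity, mul_comm]

theorem norm_hilbertSchmidt_single_kronecker_one_sq (x y : α) :
    ‖hilbertSchmidt (single x y (1 : ℂ) ⊗ₖ (1 : Matrix β β ℂ))‖ ^ 2 = Fintype.card β := by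
  simp only [norm_hilbertSchmidt_sq, Fintype.sum_prod_type, kronecker_apply, single_apply,
    one_apply, ite_and, mul_ite, mul_one, mul_zero, apply_ite (‖·‖ ^ 2), norm_one, norm_zero]
  simp

theorem trace_single_kronecker_one (x y : α) :
    trace (single x y (1 : ℂ) ⊗ₖ (1 : Matrix β β ℂ)) =
      if x = y then (Fintype.card β : ℂ) else 0 := by
  rw [trace_kronecker, trace_one]
  split_ifs with h
  · rw [h, trace_single_eq_same, one_mul]
  · rw [trace_single_eq_of_ne _ _ _ h, zero_mul]

end PartialTrace

structure IsMutuallyUnbiased {κ ι n : Type*} [DecidableEq ι] [Fintype n]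
    (b : κ → ι → n → ℂ) : Prop where
  orthonormal : ∀ k i j, star (b k i) ⬝ᵥ b k j = if i = j then 1 else 0
  unbiased : ∀ k k', k ≠ k' → ∀ i j, ‖star (b k i) ⬝ᵥ b k' j‖ ^ 2 = (Fintype.card n : ℝ)⁻¹

theorem IsMutuallyUnbiased.hilbertSchmidt_gram {κ ι n : Type*} [Fintype ι]
    [Fintype n] [DecidableEq κ] [DecidableEq ι] {b : κ → ι → n → ℂ} (hb : IsMutuallyUnbiased b)
    (hι : Fintype.card ι = Fintype.card n) (k k' : κ) (i j : ι) :
    ⟪hilbertSchmidt (vecMulVec (b k i) (star (b k i))),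
      hilbertSchmidt (vecMulVec (b k' j) (star (b k' j)))⟫_ℂ =
      if k = k' then (if i = j then 1 else 0) else ((Fintype.card ι : ℂ))⁻¹ := by
  rw [inner_hilbertSchmidt_vecMulVec_vecMulVec]
  split_ifs with hk hij
  · subst hk hij; simp [hb.orthonormal]
  · subst hk; simp [hb.orthonormal, hij]
  · rw [hb.unbiased k k' hk, hι]; push_cast; rfl

theorem IsMutuallyUnbiased.sum_purity_le {κ ι α β : Type*} [Fintype κ] [Fintype ι] [Fintype α]
    [Fintype β] [DecidableEq κ] [DecidableEq ι] [DecidableEq α] [DecidableEq β]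
    {b : κ → ι → α × β → ℂ} (hb : IsMutuallyUnbiased b)
    (hι : Fintype.card ι = Fintype.card (α × β)) (hκ : Fintype.card κ = Fintype.card ι + 1) :
    ∑ k, ∑ i, purity (b k i) ≤
      Fintype.card α ^ 2 * Fintype.card β + Fintype.card α * Fintype.card β ^ 2 := by
  have hres (k) : ∑ i, hilbertSchmidt (vecMulVec (b k i) (star (b k i))) = hilbertSchmidt 1 := by
    rw [sum_hilbertSchmidt, sum_vecMulVec_star_eq_one _ hι (hb.orthonormal k)]
  have hentry (x y : α) : ∑ k, ∑ i, ‖reducedDensity (b k i) x y‖ ^ 2 ≤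
      Fintype.card β + if x = y then (Fintype.card β : ℝ) ^ 2 else 0 := by
    have := sum_sum_norm_inner_sq_le _ _ hres (hb.hilbertSchmidt_gram hι) hκ
      (hilbertSchmidt (single y x (1 : ℂ) ⊗ₖ (1 : Matrix β β ℂ)))
    simp only [inner_hilbertSchmidt_vecMulVec, star_dotProduct_single_kronecker_one_mulVec,
      norm_hilbertSchmidt_single_kronecker_one_sq, inner_hilbertSchmidt_one,
      trace_single_kronecker_one] at this
    refine this.trans_eq ?_
    by_cases h : x = y
    · simp [h]
    · simp [h, Ne.symm h]
  calc ∑ k, ∑ i, purity (b k i)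
      = ∑ x, ∑ y, ∑ k, ∑ i, ‖reducedDensity (b k i) x y‖ ^ 2 := by
        simp only [purity]
        exact (sum_congr rfl fun _ _ => sum_comm).trans <| sum_comm.trans <|
          sum_congr rfl fun _ _ => (sum_congr rfl fun _ _ => sum_comm).trans sum_comm
    _ ≤ ∑ x : α, ∑ y : α, ((Fintype.card β : ℝ) + if x = y then (Fintype.card β : ℝ) ^ 2 else 0) :=
        sum_le_sum fun x _ => sum_le_sum fun y _ => hentry x y
    _ = _ := by
        simp [sum_add_distrib]
        ring

theorem IsMutuallyUnbiased.card_le_of_forall_isProductState {d : ℕ}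
    {B : Fin (d ^ 2 + 1) → Fin (d ^ 2) → (Fin d × Fin d → ℂ)} (hB : IsMutuallyUnbiased B)
    {S : Finset (Fin (d ^ 2 + 1))} (hS : ∀ k ∈ S, ∀ i, IsProductState d (B k i)) :
    #S ≤ d + 1 := by
  obtain hd | hd := Nat.lt_or_ge d 2
  · have := card_le_univ S
    interval_cases d <;> simpa using this
  have hunit (k i) : star (B k i) ⬝ᵥ B k i = 1 := by simpa using hB.orthonormal k i i
  set w : Fin (d ^ 2 + 1) → ℝ := fun k => d * ∑ i, purity (B k i) - d ^ 2
  have hw_nonneg (k) : 0 ≤ w k := by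
    have := sum_le_sum fun i (_ : i ∈ univ) => one_le_card_mul_purity (hunit k i)
    simp only [sum_const, card_univ, Fintype.card_fin, nsmul_eq_mul, mul_one, ← mul_sum] at this
    push_cast at this
    linarith
  have hw_prod (k) (hk : k ∈ S) : w k = d ^ 3 - d ^ 2 := by
    have hpure (i) : purity (B k i) = 1 := by
      obtain ⟨a, b, hab⟩ := hS k hk i
      exact purity_eq_one_of_eq_mul a b hab (hunit k i)
    simp only [w, hpure, sum_const, card_univ, Fintype.card_fin, nsmul_eq_mul, mul_one]
    push_cast
    ring
  have hw_sum : ∑ k, w k ≤ d ^ 4 - d ^ 2 := by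
    have := hB.sum_purity_le (by simp [sq]) (by simp)
    simp only [w, sum_sub_distrib, ← mul_sum, sum_const, card_univ, Fintype.card_fin,
      nsmul_eq_mul] at this ⊢
    push_cast at this ⊢
    nlinarith
  have hd' : (0 : ℝ) < d ^ 3 - d ^ 2 := by
    have : (2 : ℝ) ≤ d := by exact_mod_cast hd
    nlinarith
  have : (#S : ℝ) * (d ^ 3 - d ^ 2) ≤ (d + 1) * (d ^ 3 - d ^ 2) :=
    calc (#S : ℝ) * (d ^ 3 - d ^ 2) = ∑ k ∈ S, w k := by
          rw [sum_congr rfl hw_prod, sum_const, nsmul_eq_mul]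
      _ ≤ ∑ k, w k := sum_le_sum_of_subset_of_nonneg (subset_univ S) fun k _ _ => hw_nonneg k
      _ ≤ (d + 1) * (d ^ 3 - d ^ 2) := by linarith
  exact_mod_cast le_of_mul_le_mul_right this hd'

theorem product_mubs_force_entangled (d : ℕ)
    (B : Fin (d ^ 2 + 1) → Fin (d ^ 2) → (Fin d × Fin d → ℂ))
    (horth : ∀ k, ∀ i j, (∑ p : Fin d × Fin d, starRingEnd ℂ (B k i p) * B k j p)
      = if i = j then 1 else 0)
    (hmub : ∀ k k', k ≠ k' → ∀ i j,
      ‖∑ p : Fin d × Fin d, starRingEnd ℂ (B k i p) * B k' j p‖ ^ 2 = 1 / (d : ℝ) ^ 2) :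
    ∃ T : Finset (Fin (d ^ 2 + 1)), d * (d - 1) ≤ T.card ∧
      ∀ k ∈ T, ∃ i, ¬ IsProductState d (B k i) := by
  classical
  have hB : IsMutuallyUnbiased B :=
    ⟨horth, fun k k' hk i j => (hmub k k' hk i j).trans (by simp [sq])⟩
  set S : Finset (Fin (d ^ 2 + 1)) := {k | ∀ i, IsProductState d (B k i)}
  have hS : #S ≤ d + 1 := hB.card_le_of_forall_isProductState fun k hk => (mem_filter.mp hk).2
  refine ⟨Sᶜ, ?_, fun k hk => by simpa [S] using hk⟩
  rw [card_compl, Fintype.card_fin]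
  have := Nat.mul_sub_one d d
  have := Nat.le_mul_self d
  have := sq d
  omega
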